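/- Let A ∈ ℝ^{n×d} have thin SVD A = UΣVᵀ, let 1 ≤ k < rank(A), let U_k ∈ ℝ^{n×k} consist of the top k left singular vectors, and let A_{k,⊥} = A − A_k. Define sampling probabilities p_i = (1/2)‖(U_k)_{i*}‖₂²/k + (1/2)‖(A_{k,⊥})_{i*}‖₂²/‖A_{k,⊥}‖_F², and let W ∈ ℝ^{s×n} be the random sampling-and-rescaling matrix of Algorithm 1 built from these probabilities. Then E[‖U_kᵀ Wᵀ W A_{k,⊥}‖_F²] ≤ (2k/s) ‖A_{k,⊥}‖_F²; consequently, for ε > 0 and δ ∈ (0,1), if s ≥ 8k/(δ ε²) then P(‖U_kᵀ Wᵀ W A_{k,⊥}‖_F ≥ ε ‖A_{k,⊥}‖_F) ≤ δ/4. -/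

import Mathlib

/-! Write `B = U_k` and `C = A_{k,⊥}`. Entry `(j, l)` of `Bᵀ Wᵀ W C` is a sum of `s` i.i.d. copies
of `B_{tj} C_{tl} / (s p_t)` with `t ~ p`, whose mean `(Bᵀ C)_{jl} / s` vanishes. So the expected
squared Frobenius norm is the sum of the second moments, `∑_t ‖B_t‖² ‖C_t‖² / (s p_t)`, and the
leverage half of the mixture gives `‖B_t‖² ≤ 2k p_t`, hence the bound `(2k/s) ‖C‖_F²`. The
probability bound is Markov's inequality for the squared norm. -/

open Matrix BigOperators

noncomputable def frobNorm {m n : Type*} [Fintype m] [Fintype n]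
    (A : Matrix m n ℝ) : ℝ := Real.sqrt (∑ i, ∑ j, (A i j) ^ 2)

noncomputable def specNorm {m n : ℕ} (A : Matrix (Fin m) (Fin n) ℝ) : ℝ :=
  ‖LinearMap.toContinuousLinearMap (Matrix.toEuclideanLin A)‖

noncomputable def truncDiag {r : ℕ} (σ : Fin r → ℝ) (m : ℕ) :
    Matrix (Fin r) (Fin r) ℝ :=
  Matrix.diagonal fun i => if (i : ℕ) < m then σ i else 0

noncomputable def samplingMatrix {n : ℕ} (p : Fin n → ℝ) (s : ℕ) (ω : Fin s → Fin n) :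
    Matrix (Fin s) (Fin n) ℝ :=
  fun i j => if j = ω i then 1 / Real.sqrt (s * p j) else 0

noncomputable def expec {n s : ℕ} (p : Fin n → ℝ) (f : (Fin s → Fin n) → ℝ) : ℝ :=
  ∑ ω : Fin s → Fin n, (∏ i, p (ω i)) * f ω

open Classical in
noncomputable def probOf {n s : ℕ} (p : Fin n → ℝ) (E : (Fin s → Fin n) → Prop) : ℝ :=
  ∑ ω : Fin s → Fin n, if E ω then (∏ i, p (ω i)) else 0

def firstCols {n r : ℕ} (U : Matrix (Fin n) (Fin r) ℝ) (k : ℕ) (h : k ≤ r) :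
    Matrix (Fin n) (Fin k) ℝ :=
  fun i j => U i (Fin.castLE h j)

noncomputable def ridgeDiag {r : ℕ} (σ : Fin r → ℝ) (lam : ℝ) :
    Matrix (Fin r) (Fin r) ℝ :=
  Matrix.diagonal fun i => σ i / Real.sqrt (σ i ^ 2 + lam)

section Expectation

variable {n s : ℕ} (p : Fin n → ℝ)

lemma expec_sum {ι : Type*} [Fintype ι] (f : ι → (Fin s → Fin n) → ℝ) :
    expec p (fun ω => ∑ i, f i ω) = ∑ i, expec p (f i) := by
  simp only [expec, Finset.mul_sum]
  exact Finset.sum_comm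

lemma expec_prod_apply (f : Fin s → Fin n → ℝ) :
    expec p (fun ω => ∏ i, f i (ω i)) = ∏ i, ∑ t, p t * f i t := by
  simp only [expec, ← Finset.prod_mul_distrib]
  exact (Fintype.prod_sum fun i t => p t * f i t).symm

variable {p}

lemma expec_comp_eval (hp : ∑ t, p t = 1) (i₀ : Fin s) (g : Fin n → ℝ) :
    expec p (fun ω => g (ω i₀)) = ∑ t, p t * g t := by
  simpa [mul_ite, hp] using expec_prod_apply p fun i t => if i = i₀ then g t else 1

lemma expec_mul_comp_eval_of_ne (hp : ∑ t, p t = 1) {i₀ i₁ : Fin s} (hne : i₀ ≠ i₁)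
    (g h : Fin n → ℝ) :
    expec p (fun ω => g (ω i₀) * h (ω i₁)) = (∑ t, p t * g t) * ∑ t, p t * h t := by
  have hfactor : ∀ i, ∑ t, p t * ((if i = i₀ then g t else 1) * (if i = i₁ then h t else 1))
      = (if i = i₀ then ∑ t, p t * g t else 1) * (if i = i₁ then ∑ t, p t * h t else 1) := by
    intro i
    by_cases h₀ : i = i₀
    · simp [h₀, hne]
    · by_cases h₁ : i = i₁ <;> simp [h₀, h₁, hp, hne.symm]
  have hprod : ∀ ω : Fin s → Fin n, g (ω i₀) * h (ω i₁)
      = ∏ i, (if i = i₀ then g (ω i) else 1) * (if i = i₁ then h (ω i) else 1) := by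
    intro ω
    simp only [Finset.prod_mul_distrib, Finset.prod_ite_eq', Finset.mem_univ, if_true]
  rw [funext hprod,
    expec_prod_apply p fun i t => (if i = i₀ then g t else 1) * (if i = i₁ then h t else 1)]
  simp only [hfactor, Finset.prod_mul_distrib, Finset.prod_ite_eq', Finset.mem_univ, if_true]

lemma expec_sum_comp_eval_sq (hp : ∑ t, p t = 1) (x : Fin n → ℝ) (hx : ∑ t, p t * x t = 0) :
    expec p (fun ω : Fin s → Fin n => (∑ i, x (ω i)) ^ 2) = s * ∑ t, p t * x t ^ 2 := by
  have hpair : ∀ i j : Fin s, expec p (fun ω => x (ω i) * x (ω j))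
      = if i = j then ∑ t, p t * x t ^ 2 else 0 := by
    intro i j
    split_ifs with hij
    · subst hij
      simpa [sq] using expec_comp_eval hp i fun t => x t * x t
    · rw [expec_mul_comp_eval_of_ne hp hij, hx, zero_mul]
  simp only [sq, Finset.sum_mul_sum, expec_sum, hpair, Finset.sum_ite_eq, Finset.mem_univ,
    if_true, Finset.sum_const, Finset.card_univ, Fintype.card_fin, nsmul_eq_mul]

lemma probOf_le_expec_div (hp : ∀ t, 0 ≤ p t) {E : (Fin s → Fin n) → Prop}
    {f : (Fin s → Fin n) → ℝ} {a : ℝ} (ha : 0 < a) (hf : ∀ ω, 0 ≤ f ω)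
    (hE : ∀ ω, E ω → a ≤ f ω) :
    probOf p E ≤ expec p f / a := by
  have hω : ∀ ω : Fin s → Fin n, 0 ≤ ∏ i, p (ω i) := fun ω => Finset.prod_nonneg fun i _ => hp _
  rw [le_div_iff₀ ha, probOf, expec, Finset.sum_mul]
  refine Finset.sum_le_sum fun ω _ => ?_
  split_ifs with h
  · exact mul_le_mul_of_nonneg_left (hE ω h) (hω ω)
  · rw [zero_mul]
    exact mul_nonneg (hω ω) (hf ω)

lemma probOf_le_expec_sq_div (hp : ∀ t, 0 ≤ p t) (X : (Fin s → Fin n) → ℝ) {a : ℝ}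
    (ha : 0 < a) :
    probOf p (fun ω => a ≤ X ω) ≤ expec p (fun ω => X ω ^ 2) / a ^ 2 :=
  probOf_le_expec_div hp (by positivity) (fun ω => sq_nonneg _)
    fun ω hω => pow_le_pow_left₀ ha.le hω 2

end Expectation

section Frobenius

variable {m l : Type*} [Fintype m] [Fintype l]

lemma frobNorm_sq (A : Matrix m l ℝ) : frobNorm A ^ 2 = ∑ i, ∑ j, A i j ^ 2 :=
  Real.sq_sqrt (by positivity)

lemma frobNorm_pos {A : Matrix m l ℝ} (hA : A ≠ 0) : 0 < frobNorm A := by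
  refine Real.sqrt_pos.2 (lt_of_le_of_ne (by positivity) fun h => hA ?_)
  ext i j
  have hrow := (Finset.sum_eq_zero_iff_of_nonneg fun i _ => by positivity).1 h.symm i
    (Finset.mem_univ _)
  simpa using (Finset.sum_eq_zero_iff_of_nonneg fun j _ => sq_nonneg _).1 hrow j
    (Finset.mem_univ _)

end Frobenius

section Sampling

variable {m l : Type*} {n s : ℕ} {p : Fin n → ℝ}

lemma samplingMatrix_sandwich_apply (hp : ∀ t, 0 ≤ p t) (B : Matrix (Fin n) m ℝ)
    (C : Matrix (Fin n) l ℝ) (ω : Fin s → Fin n) (j : m) (c : l) :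
    (Bᵀ * (samplingMatrix p s ω)ᵀ * samplingMatrix p s ω * C) j c
      = ∑ i, B (ω i) j * C (ω i) c / (s * p (ω i)) := by
  rw [Matrix.mul_assoc, mul_apply]
  refine Finset.sum_congr rfl fun i _ => ?_
  simp only [mul_apply, transpose_apply, samplingMatrix, mul_ite, ite_mul, mul_zero, zero_mul,
    Finset.sum_ite_eq', Finset.mem_univ, if_true]
  calc _ = B (ω i) j * C (ω i) c / (√(s * p (ω i)) * √(s * p (ω i))) := by ring
    _ = _ := by rw [Real.mul_self_sqrt (mul_nonneg (Nat.cast_nonneg s) (hp (ω i)))]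

variable [Fintype m] [Fintype l]

theorem expec_frobNorm_sq_sampled (hp0 : ∀ t, 0 ≤ p t) (hp1 : ∑ t, p t = 1)
    (B : Matrix (Fin n) m ℝ) (C : Matrix (Fin n) l ℝ) (hBC : Bᵀ * C = 0)
    (hBp : ∀ t, p t = 0 → ∀ j, B t j = 0) :
    expec p (fun ω : Fin s → Fin n =>
        frobNorm (Bᵀ * (samplingMatrix p s ω)ᵀ * samplingMatrix p s ω * C) ^ 2)
      = ∑ t, (∑ j, B t j ^ 2) * (∑ c, C t c ^ 2) / (s * p t) := by
  have hmean : ∀ j c, ∑ t, p t * (B t j * C t c / (s * p t)) = 0 := by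
    intro j c
    have hterm : ∀ t, p t * (B t j * C t c / (s * p t)) = B t j * C t c / s := by
      intro t
      rcases eq_or_ne (p t) 0 with h | h
      · simp [h, hBp t h j]
      · field_simp
    have hjc : ∑ t, B t j * C t c = 0 := by simpa [mul_apply] using congr_fun₂ hBC j c
    simp only [hterm, ← Finset.sum_div, hjc, zero_div]
  have hsq : ∀ t x, (s : ℝ) * (p t * (x / (s * p t)) ^ 2) = x ^ 2 / (s * p t) := by
    intro t x
    rcases eq_or_ne ((s : ℝ) * p t) 0 with h | h
    · rw [← mul_assoc, h]
      simp
    · field_simp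
  simp only [frobNorm_sq, samplingMatrix_sandwich_apply hp0, expec_sum,
    expec_sum_comp_eval_sq hp1 _ (hmean _ _), Finset.mul_sum, hsq]
  rw [Finset.sum_comm_cycle]
  refine Finset.sum_congr rfl fun t _ => ?_
  simp only [Finset.sum_mul, Finset.sum_div, mul_pow]
  exact Finset.sum_comm

theorem expec_frobNorm_sq_sampled_le (hp0 : ∀ t, 0 ≤ p t) (hp1 : ∑ t, p t = 1)
    (B : Matrix (Fin n) m ℝ) (C : Matrix (Fin n) l ℝ) (hBC : Bᵀ * C = 0) {β : ℝ}
    (hB : ∀ t, ∑ j, B t j ^ 2 ≤ β * p t) :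
    expec p (fun ω : Fin s → Fin n =>
        frobNorm (Bᵀ * (samplingMatrix p s ω)ᵀ * samplingMatrix p s ω * C) ^ 2)
      ≤ β / s * frobNorm C ^ 2 := by
  have hβ : 0 ≤ β := by
    simpa [← Finset.mul_sum, hp1] using
      (Finset.sum_nonneg fun t _ => by positivity).trans
        (Finset.sum_le_sum (s := Finset.univ) fun t _ => hB t)
  have hBp : ∀ t, p t = 0 → ∀ j, B t j = 0 := by
    intro t ht j
    have hrow : ∑ j, B t j ^ 2 = 0 := le_antisymm (by simpa [ht] using hB t) (by positivity)
    simpa using (Finset.sum_eq_zero_iff_of_nonneg fun j _ => sq_nonneg _).1 hrow j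
      (Finset.mem_univ _)
  rw [expec_frobNorm_sq_sampled hp0 hp1 B C hBC hBp, frobNorm_sq, Finset.mul_sum]
  refine Finset.sum_le_sum fun t _ => ?_
  rcases eq_or_ne (p t) 0 with h | h
  · simp only [h, mul_zero, div_zero]
    positivity
  · calc (∑ j, B t j ^ 2) * (∑ c, C t c ^ 2) / (s * p t)
        ≤ β * p t * (∑ c, C t c ^ 2) / (s * p t) :=
          div_le_div_of_nonneg_right (mul_le_mul_of_nonneg_right (hB t) (by positivity))
            (mul_nonneg (Nat.cast_nonneg s) (hp0 t))
      _ = β / s * ∑ c, C t c ^ 2 := by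
        rw [mul_right_comm, mul_div_mul_right _ _ h, div_mul_eq_mul_div]

end Sampling

section LeverageMixture

variable {ι : Type*} [Fintype ι] {p b c : ι → ℝ} {k : ℝ}

lemma mixture_nonneg (hb : ∀ t, 0 ≤ b t) (hc : ∀ t, 0 ≤ c t) (hk : 0 ≤ k)
    (hp : ∀ t, p t = 1 / 2 * (b t / k) + 1 / 2 * (c t / ∑ u, c u)) (t : ι) : 0 ≤ p t := by
  have hC : 0 ≤ ∑ u, c u := Finset.sum_nonneg fun u _ => hc u
  rw [hp t]
  exact add_nonneg (mul_nonneg (by norm_num) (div_nonneg (hb t) hk))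
    (mul_nonneg (by norm_num) (div_nonneg (hc t) hC))

lemma sum_mixture_eq_one (hbk : ∑ t, b t = k) (hk : k ≠ 0) (hc : ∑ t, c t ≠ 0)
    (hp : ∀ t, p t = 1 / 2 * (b t / k) + 1 / 2 * (c t / ∑ u, c u)) : ∑ t, p t = 1 := by
  simp only [hp, Finset.sum_add_distrib, ← Finset.mul_sum, ← Finset.sum_div, hbk,
    div_self hk, div_self hc]
  norm_num

lemma le_two_mul_mixture (hc : ∀ t, 0 ≤ c t) (hk : 0 < k)
    (hp : ∀ t, p t = 1 / 2 * (b t / k) + 1 / 2 * (c t / ∑ u, c u)) (t : ι) :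
    b t ≤ 2 * k * p t := by
  have hct : 0 ≤ k * (c t / ∑ u, c u) :=
    mul_nonneg hk.le (div_nonneg (hc t) (Finset.sum_nonneg fun u _ => hc u))
  have hbt : 2 * k * (1 / 2 * (b t / k)) = b t := by field_simp
  rw [hp t, mul_add, hbt]
  linarith

end LeverageMixture

section SingularVectors

variable {ι m : Type*} [Fintype m] {n r : ℕ}

lemma sum_sq_eq_card_of_transpose_mul_self_eq_one {B : Matrix ι m ℝ} [Fintype ι]
    [DecidableEq m] (hB : Bᵀ * B = 1) : ∑ t, ∑ j, B t j ^ 2 = Fintype.card m := by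
  have htr := congr_arg trace hB
  simp only [trace, diag_apply, mul_apply, transpose_apply, one_apply_eq, Finset.sum_const,
    Finset.card_univ, nsmul_eq_mul, mul_one] at htr
  rw [Finset.sum_comm, ← htr]
  simp only [sq]

lemma transpose_mul_mul_mul_transpose_mul {ν : Type*} [Fintype ι] [Fintype ν] [DecidableEq m]
    {U : Matrix ι m ℝ} {V : Matrix ν m ℝ} (hU : Uᵀ * U = 1) (hV : Vᵀ * V = 1)
    (D : Matrix m m ℝ) : Uᵀ * (U * D * Vᵀ) * V = D := by
  simp only [← Matrix.mul_assoc, hU, Matrix.one_mul]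
  rw [Matrix.mul_assoc, hV, Matrix.mul_one]

lemma diagonal_sub_truncDiag (σ : Fin r → ℝ) (k : ℕ) :
    diagonal σ - truncDiag σ k = diagonal fun i : Fin r => if (i : ℕ) < k then 0 else σ i := by
  rw [truncDiag, diagonal_sub]
  congr 1
  funext i
  split_ifs <;> simp

variable {U : Matrix (Fin n) (Fin r) ℝ} {k : ℕ}

lemma firstCols_transpose_mul (h : k ≤ r) (M : Matrix (Fin n) ι ℝ) :
    (firstCols U k h)ᵀ * M = (Uᵀ * M).submatrix (Fin.castLE h) id :=
  rfl

lemma firstCols_transpose_mul_self (hU : Uᵀ * U = 1) (h : k ≤ r) :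
    (firstCols U k h)ᵀ * firstCols U k h = 1 := by
  ext i j
  rw [firstCols_transpose_mul, submatrix_apply]
  change (Uᵀ * U) _ _ = _
  simp [hU, one_apply]

lemma firstCols_transpose_mul_eq_zero (hU : Uᵀ * U = 1) (h : k ≤ r) {D : Fin r → ℝ}
    (hD : ∀ i : Fin r, (i : ℕ) < k → D i = 0) (M : Matrix (Fin r) ι ℝ) :
    (firstCols U k h)ᵀ * (U * diagonal D * M) = 0 := by
  ext j c
  rw [firstCols_transpose_mul, submatrix_apply, ← Matrix.mul_assoc, ← Matrix.mul_assoc, hU,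
    Matrix.one_mul, diagonal_mul, hD _ j.isLt, zero_mul]
  rfl

variable {d : ℕ} {A : Matrix (Fin n) (Fin d) ℝ} {V : Matrix (Fin d) (Fin r) ℝ} {σ : Fin r → ℝ}

lemma sub_truncDiag_eq (hA : A = U * diagonal σ * Vᵀ) :
    A - U * truncDiag σ k * Vᵀ
      = U * diagonal (fun i : Fin r => if (i : ℕ) < k then 0 else σ i) * Vᵀ := by
  rw [← diagonal_sub_truncDiag, Matrix.mul_sub, Matrix.sub_mul, ← hA]

lemma firstCols_transpose_mul_sub_truncDiag (hU : Uᵀ * U = 1) (hA : A = U * diagonal σ * Vᵀ)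
    (h : k ≤ r) : (firstCols U k h)ᵀ * (A - U * truncDiag σ k * Vᵀ) = 0 := by
  rw [sub_truncDiag_eq hA]
  exact firstCols_transpose_mul_eq_zero hU h (fun i hi => if_pos hi) Vᵀ

lemma sub_truncDiag_ne_zero (hU : Uᵀ * U = 1) (hV : Vᵀ * V = 1) (hA : A = U * diagonal σ * Vᵀ)
    (hkr : k < r) (hσ : σ ⟨k, hkr⟩ ≠ 0) : A - U * truncDiag σ k * Vᵀ ≠ 0 := by
  intro h0
  have hσk := congr_fun₂ (transpose_mul_mul_mul_transpose_mul hU hV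
    (diagonal fun i : Fin r => if (i : ℕ) < k then 0 else σ i)) ⟨k, hkr⟩ ⟨k, hkr⟩
  simp only [← sub_truncDiag_eq hA, h0, Matrix.mul_zero, Matrix.zero_mul, Matrix.zero_apply,
    diagonal_apply_eq, lt_irrefl, if_false] at hσk
  exact hσ hσk.symm

end SingularVectors

theorem stmt_11_general {n d r : ℕ} {k : ℕ} (s : ℕ)
    (A : Matrix (Fin n) (Fin d) ℝ)
    (U : Matrix (Fin n) (Fin r) ℝ) (V : Matrix (Fin d) (Fin r) ℝ) (σ : Fin r → ℝ)
    (hU : Uᵀ * U = 1) (hV : Vᵀ * V = 1)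
    (hσpos : ∀ i, 0 < σ i)
    (hA : A = U * Matrix.diagonal σ * Vᵀ)
    (hk1 : 1 ≤ k) (hkr : k < r)
    (p : Fin n → ℝ)
    (hpdef : ∀ i, p i =
        1 / 2 * ((∑ j, (firstCols U k hkr.le i j) ^ 2) / k)
      + 1 / 2 * ((∑ j, ((A - U * truncDiag σ k * Vᵀ) i j) ^ 2)
          / frobNorm (A - U * truncDiag σ k * Vᵀ) ^ 2)) :
    expec p (fun (ω : Fin s → Fin n) =>
        frobNorm ((firstCols U k hkr.le)ᵀ * (samplingMatrix p s ω)ᵀ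
          * samplingMatrix p s ω * (A - U * truncDiag σ k * Vᵀ)) ^ 2)
      ≤ 2 * k / s * frobNorm (A - U * truncDiag σ k * Vᵀ) ^ 2
    ∧ ∀ ε δ : ℝ, 0 < ε → 0 < δ → δ < 1 → (s : ℝ) ≥ 8 * k / (δ * ε ^ 2) →
        probOf p (fun (ω : Fin s → Fin n) =>
          ε * frobNorm (A - U * truncDiag σ k * Vᵀ)
            ≤ frobNorm ((firstCols U k hkr.le)ᵀ * (samplingMatrix p s ω)ᵀ
                * samplingMatrix p s ω * (A - U * truncDiag σ k * Vᵀ)))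
        ≤ δ / 4 := by
  set B := firstCols U k hkr.le
  set C := A - U * truncDiag σ k * Vᵀ
  have hBC : Bᵀ * C = 0 := firstCols_transpose_mul_sub_truncDiag hU hA hkr.le
  have hC : 0 < frobNorm C := frobNorm_pos (sub_truncDiag_ne_zero hU hV hA hkr (hσpos _).ne')
  have hk : (0 : ℝ) < k := by exact_mod_cast hk1
  have hp : ∀ t, p t = 1 / 2 * ((∑ j, B t j ^ 2) / k)
      + 1 / 2 * ((∑ j, C t j ^ 2) / ∑ u, ∑ j, C u j ^ 2) := by
    simpa only [frobNorm_sq] using hpdef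
  have hBk : ∑ t, ∑ j, B t j ^ 2 = k := by
    simpa using
      sum_sq_eq_card_of_transpose_mul_self_eq_one (firstCols_transpose_mul_self hU hkr.le)
  have hp0 := mixture_nonneg (fun t => by positivity) (fun t => by positivity) hk.le hp
  have hp1 := sum_mixture_eq_one hBk hk.ne' (by rw [← frobNorm_sq]; positivity) hp
  have hexp := expec_frobNorm_sq_sampled_le (s := s) hp0 hp1 B C hBC
    (le_two_mul_mixture (fun t => by positivity) hk hp)
  refine ⟨hexp, fun ε δ hε hδ _ hsδ => ?_⟩
  have hs : (0 : ℝ) < s := lt_of_lt_of_le (by positivity) hsδ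
  rw [ge_iff_le, div_le_iff₀ (by positivity)] at hsδ
  calc _ ≤ _ := probOf_le_expec_sq_div hp0 _ (by positivity)
    _ ≤ 2 * k / s * frobNorm C ^ 2 / (ε * frobNorm C) ^ 2 := by gcongr
    _ = 2 * k / (s * ε ^ 2) := by field_simp
    _ ≤ δ / 4 := by
      rw [div_le_div_iff₀ (by positivity) (by norm_num)]
      linarith

/-- leverage-score sampling, cross-term expectation and probability bound. -/
theorem stmt_11 {n d r : ℕ} {k : ℕ} (s : ℕ) (hs : 0 < s)
    (A : Matrix (Fin n) (Fin d) ℝ)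
    (U : Matrix (Fin n) (Fin r) ℝ) (V : Matrix (Fin d) (Fin r) ℝ) (σ : Fin r → ℝ)
    (hU : Uᵀ * U = 1) (hV : Vᵀ * V = 1)
    (hσdec : ∀ i j : Fin r, i ≤ j → σ j ≤ σ i) (hσpos : ∀ i, 0 < σ i)
    (hA : A = U * Matrix.diagonal σ * Vᵀ) (hrank : A.rank = r)
    (hk1 : 1 ≤ k) (hkr : k < r)
    (p : Fin n → ℝ)
    (hpdef : ∀ i, p i =
        1 / 2 * ((∑ j, (firstCols U k hkr.le i j) ^ 2) / k)
      + 1 / 2 * ((∑ j, ((A - U * truncDiag σ k * Vᵀ) i j) ^ 2)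
          / frobNorm (A - U * truncDiag σ k * Vᵀ) ^ 2)) :
    expec p (fun (ω : Fin s → Fin n) =>
        frobNorm ((firstCols U k hkr.le)ᵀ * (samplingMatrix p s ω)ᵀ
          * samplingMatrix p s ω * (A - U * truncDiag σ k * Vᵀ)) ^ 2)
      ≤ 2 * k / s * frobNorm (A - U * truncDiag σ k * Vᵀ) ^ 2
    ∧ ∀ ε δ : ℝ, 0 < ε → 0 < δ → δ < 1 → (s : ℝ) ≥ 8 * k / (δ * ε ^ 2) →
        probOf p (fun (ω : Fin s → Fin n) =>
          ε * frobNorm (A - U * truncDiag σ k * Vᵀ)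
            ≤ frobNorm ((firstCols U k hkr.le)ᵀ * (samplingMatrix p s ω)ᵀ
                * samplingMatrix p s ω * (A - U * truncDiag σ k * Vᵀ)))
        ≤ δ / 4 :=
  stmt_11_general s A U V σ hU hV hσpos hA hk1 hkr p hpdef
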